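/- arXiv:1604.02547 — 11 statements merged into one kernel-verified Lean document; each statement's English description precedes it below -/
import Mathlib

section
/- Let R be a commutative ring and p, q ∈ R with pq + 2 = 0. Then the set Z_{pq}(R) = {r ∈ R | r² = qr}, equipped with the operation r +₁ s = r + s + p·r·s, is an abelian group with identity element 0, where the inverse of r is -r - p·r². -/
/-- The set `Z_{pq}(R) = {r ∈ R | r² = qr}` with operation `r +₁ s = r + s + p r s`
is an abelian group with identity `0`, every element having an inverse. -/
theorem stmt_0 (R : Type*) [CommRing R] (p q : R) (h : p * q + 2 = 0) :
    -- closure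
    (∀ r s : R, r ^ 2 = q * r → s ^ 2 = q * s →
      (r + s + p * r * s) ^ 2 = q * (r + s + p * r * s)) ∧
    -- 0 belongs to the set
    ((0 : R) ^ 2 = q * 0) ∧
    -- associativity
    (∀ r s t : R,
      (r + s + p * r * s) + t + p * (r + s + p * r * s) * t =
      r + (s + t + p * s * t) + p * r * (s + t + p * s * t)) ∧
    -- commutativity
    (∀ r s : R, r + s + p * r * s = s + r + p * s * r) ∧
    -- 0 is the identity
    (∀ r : R, r + 0 + p * r * 0 = r) ∧
    -- every element has an inverse, namely `-r - p r²`
    (∀ r : R, r ^ 2 = q * r → (-r - p * r ^ 2) ^ 2 = q * (-r - p * r ^ 2) ∧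
      r + (-r - p * r ^ 2) + p * r * (-r - p * r ^ 2) = 0) := by
  refine ⟨?_, by ring, fun r s t => by ring, fun r s => by ring, fun r => by ring, ?_⟩
  · intro r s hr hs
    linear_combination (1 + p^2*s^2 + 2*p*s) * hr + (1 + p^2*q*r + 2*p*r) * hs
      + (p*q + 1) * r * s * h
  · intro r hr
    have e : -r - p * r ^ 2 = r := by linear_combination -p * hr - r * h
    rw [e]
    exact ⟨hr, by linear_combination p * hr + r * h⟩
end

section
/- Let R be a commutative ring and p, q ∈ R with pq + 2 = 0. The map ζ : V₁(R) → V₂(R) defined by ζ(r) = r² - qr is a group homomorphism, i.e. ζ(r +₁ s) = ζ(r) +₂ ζ(s) and 1 + p²·ζ(r) ∈ R* whenever 1 + pr ∈ R*. -/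
/-- The map `ζ(r) = r² - qr` is a group homomorphism `V₁(R) → V₂(R)`:
it lands in `V₂(R)` and is additive with respect to `+₁` and `+₂`. -/
theorem stmt_3 (R : Type*) [CommRing R] (p q : R) (h : p * q + 2 = 0) :
    (∀ r : R, IsUnit (1 + p * r) → IsUnit (1 + p ^ 2 * (r ^ 2 - q * r))) ∧
    (∀ r s : R,
      (r + s + p * r * s) ^ 2 - q * (r + s + p * r * s) =
      (r ^ 2 - q * r) + (s ^ 2 - q * s) + p ^ 2 * (r ^ 2 - q * r) * (s ^ 2 - q * s)) := by
  constructor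
  · intro r hr
    have key : 1 + p ^ 2 * (r ^ 2 - q * r) = (1 + p * r) ^ 2 := by
      linear_combination (-(p * r)) * h
    rw [key]
    exact hr.pow 2
  · intro r s
    linear_combination (r * s * (1 - p * q) + p * r * s * (r + s)) * h
end

section
/- Let R be a commutative ring and p, q ∈ R with pq + 2 = 0. The kernel of the homomorphism Sq : (R/pR)* → (R/p²R)* (squaring a lift) is isomorphic as a group to the image of the natural map μ₂(R/p²R) → μ₂(R/pR), where μ₂(S) = {s ∈ S | s² = 1}. -/
/-- The kernel of `Sq : (R/pR)* → (R/p²R)*` (squaring a lift) is isomorphic to the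
image of the natural map `μ₂(R/p²R) → μ₂(R/pR)`, where `μ₂(S) = {s | s² = 1}` is
the subgroup of square roots of unity (`rootsOfUnity 2`). -/
theorem stmt_6 (R : Type*) [CommRing R] (p q : R) (h : p * q + 2 = 0)
    (Sq : (R ⧸ Ideal.span {p})ˣ →* (R ⧸ Ideal.span {p ^ 2})ˣ)
    (hSq : ∀ (r : R) (hr : IsUnit (Ideal.Quotient.mk (Ideal.span {p}) r)),
      (Sq hr.unit : R ⧸ Ideal.span {p ^ 2}) =
        Ideal.Quotient.mk (Ideal.span {p ^ 2}) (r ^ 2)) :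
    Nonempty (Sq.ker ≃*
      Subgroup.map
        (Units.map (Ideal.Quotient.factor (S := Ideal.span {p ^ 2}) (T := Ideal.span {p})
          (Ideal.span_singleton_le_span_singleton.mpr ⟨p, sq p⟩)).toMonoidHom)
        (rootsOfUnity 2 (R ⧸ Ideal.span {p ^ 2}))) := by
  set I := Ideal.span ({p} : Set R)
  set J := Ideal.span ({p ^ 2} : Set R)
  set f := Ideal.Quotient.factor (S := J) (T := I)
    (Ideal.span_singleton_le_span_singleton.mpr ⟨p, sq p⟩)
  have hfact : ∀ r : R, f (Ideal.Quotient.mk J r) = Ideal.Quotient.mk I r := fun r => rfl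
  refine ⟨MulEquiv.subgroupCongr ?_⟩
  ext u
  simp only [MonoidHom.mem_ker, Subgroup.mem_map]
  constructor
  · intro hu
    obtain ⟨r, hr⟩ := Ideal.Quotient.mk_surjective (I := I) (u : R ⧸ I)
    have hru : IsUnit (Ideal.Quotient.mk I r) := hr ▸ u.isUnit
    have hunit : hru.unit = u := Units.ext (by simp [hr])
    have hsq1 : (Ideal.Quotient.mk J r) * (Ideal.Quotient.mk J r) = 1 := by
      have := hSq r hru
      rw [hunit, hu] at this
      rw [← map_mul, ← sq, ← this]; rfl
    refine ⟨⟨Ideal.Quotient.mk J r, Ideal.Quotient.mk J r, hsq1, hsq1⟩, ?_, ?_⟩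
    · rw [mem_rootsOfUnity]
      exact Units.ext (by simpa [sq] using hsq1)
    · exact Units.ext (by simp [hfact, hr])
  · rintro ⟨v, hv, hvu⟩
    rw [mem_rootsOfUnity] at hv
    obtain ⟨r, hr⟩ := Ideal.Quotient.mk_surjective (I := J) (v : R ⧸ J)
    have hru : IsUnit (Ideal.Quotient.mk I r) := by
      have : Ideal.Quotient.mk I r = (u : R ⧸ I) := by
        rw [← hfact, hr, ← hvu]; rfl
      rw [this]; exact u.isUnit
    have hunit : hru.unit = u := by
      apply Units.ext
      rw [IsUnit.unit_spec, ← hfact, hr, ← hvu]; rfl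
    apply Units.ext
    rw [← hunit, hSq r hru]
    have : (Ideal.Quotient.mk J r) ^ 2 = ((v ^ 2 : (R ⧸ J)ˣ) : R ⧸ J) := by
      rw [hr]; push_cast; ring
    rw [map_pow, this, hv, Units.val_one]
end

section
/- Let R be a commutative ring and p, q ∈ R with pq + 2 = 0. Define objects of Qu_f^{pq}(R) as pairs [a,b] with a, b ∈ R and a² + p²b ∈ R*, and a morphism [c,d] → [a,b] as a pair (u,r) with u ∈ R*, r ∈ R, c = au - pr, and d = u²b - qrua - r². Then composition (v,s)∘(u,r) = (vu, rv + s) is well-defined: if (u,r) : [c,d] → [a,b] and (v,s) : [e,f] → [c,d] are morphisms, then (vu, rv + s) is a morphism [e,f] → [a,b]. -/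
/-- Composition of morphisms in `Qu_f^{pq}(R)` is well defined: if `(u,r) : [c,d] → [a,b]`
and `(v,s) : [e,f] → [c,d]` are morphisms, then `(vu, rv+s)` is a morphism `[e,f] → [a,b]`. -/
theorem stmt_7 (R : Type*) [CommRing R] (p q : R) (h : p * q + 2 = 0)
    (a b c d e f u r v s : R)
    (hu : IsUnit u) (hc : c = a * u - p * r) (hd : d = u ^ 2 * b - q * r * u * a - r ^ 2)
    (hv : IsUnit v) (he : e = c * v - p * s) (hf : f = v ^ 2 * d - q * s * v * c - s ^ 2) :
    IsUnit (v * u) ∧ e = a * (v * u) - p * (r * v + s) ∧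
      f = (v * u) ^ 2 * b - q * (r * v + s) * (v * u) * a - (r * v + s) ^ 2 := by
  subst hc hd he hf
  refine ⟨hv.mul hu, by ring, ?_⟩
  linear_combination (s * v * r) * h
end

section
/- Let R be a commutative ring, p, q ∈ R with pq + 2 = 0, and suppose p is not a zero divisor in R. Given objects [a,b], [c,d] with a² + p²b, c² + p²d ∈ R*, and a unit u ∈ R* such that c² + p²d = u²(a² + p²b) and c ≡ ua (mod pR), there exists a unique r ∈ R such that c = ua - pr and d = u²b - qrua - r²; i.e. (u,r) is the unique morphism [c,d] → [a,b] inducing u. -/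
/-- If `p` is not a zero divisor, then given objects `[a,b]`, `[c,d]` of `Qu_f^{pq}(R)`
and a unit `u` with `c² + p²d = u²(a² + p²b)` and `c ≡ ua (mod pR)`, there is a unique
`r ∈ R` making `(u,r)` a morphism `[c,d] → [a,b]`. -/
theorem stmt_11 (R : Type*) [CommRing R] (p q : R) (h : p * q + 2 = 0)
    (hp : ∀ x : R, p * x = 0 → x = 0)
    (a b c d u : R) (hab : IsUnit (a ^ 2 + p ^ 2 * b)) (hcd : IsUnit (c ^ 2 + p ^ 2 * d))
    (hu : IsUnit u) (h1 : c ^ 2 + p ^ 2 * d = u ^ 2 * (a ^ 2 + p ^ 2 * b))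
    (h2 : ∃ r₀ : R, c = u * a - p * r₀) :
    ∃! r : R, c = a * u - p * r ∧ d = u ^ 2 * b - q * r * u * a - r ^ 2 := by
  obtain ⟨r₀, hr₀⟩ := h2
  have h2' : (2 : R) = -(p * q) := by linear_combination h
  refine ⟨r₀, ⟨by rw [hr₀]; ring, ?_⟩, ?_⟩
  · -- d = u²b - q r₀ u a - r₀²
    have key : p * (p * (d - (u ^ 2 * b - q * r₀ * u * a - r₀ ^ 2))) = 0 := by
      subst hr₀
      linear_combination h1 + (p * u * a * r₀) * h
    exact sub_eq_zero.mp (hp _ (hp _ key))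
  · rintro r ⟨hc, -⟩
    have : p * (r₀ - r) = 0 := by linear_combination hr₀ - hc
    linear_combination -(hp _ this)
end

section
/- Let R be a commutative ring and p, q ∈ R with pq + 2 = 0, and recall that an automorphism of an object [a,b] in Qu_f^{pq}(R) is a pair (u,s) with u ∈ R*, a = au - ps and b = u²b - qsua - s². Then the map r ↦ (1 + pr, r) is a bijection from Z_{pq}(R) = {r ∈ R | r² = qr} to the set of automorphisms of the object [1,0] in Qu_f^{pq}(R), i.e. to the set of pairs (u,s) with u ∈ R*, 1 = u - ps and 0 = -qsu - s². Moreover, this bijection is a group isomorphism from (Z_{pq}(R), +₁) to the automorphism group of [1,0] under composition (v,s)∘(u,r) = (vu, rv + s). -/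
/-- The map `r ↦ (1 + pr, r)` is a group isomorphism from `(Z_{pq}(R), +₁)` onto the
automorphism group of the object `[1,0]` of `Qu_f^{pq}(R)`, i.e. onto the set of pairs
`(u,r)` with `u ∈ R*`, `1 = u - pr`, `0 = -q·r·u - r²`, with composition
`(v,s)∘(u,r) = (vu, rv+s)`. -/
theorem stmt_12 (R : Type*) [CommRing R] (p q : R) (h : p * q + 2 = 0) :
    -- well-defined: the image of `r` is an automorphism of `[1,0]`
    (∀ r : R, r ^ 2 = q * r →
      IsUnit (1 + p * r) ∧ (1 : R) = (1 + p * r) - p * r ∧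
        (0 : R) = -(q * r * (1 + p * r)) - r ^ 2) ∧
    -- injective
    (∀ r r' : R, r ^ 2 = q * r → r' ^ 2 = q * r' →
      ((1 + p * r, r) : R × R) = (1 + p * r', r') → r = r') ∧
    -- surjective: every automorphism `(u,s)` of `[1,0]` is of this form
    (∀ u s : R, IsUnit u → (1 : R) = u - p * s → (0 : R) = -(q * s * u) - s ^ 2 →
      s ^ 2 = q * s ∧ u = 1 + p * s) ∧
    -- group homomorphism: composition corresponds to `+₁`
    (∀ r r' : R, r ^ 2 = q * r → r' ^ 2 = q * r' →
      (((1 + p * r') * (1 + p * r), r * (1 + p * r') + r') : R × R) =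
        (1 + p * (r + r' + p * r * r'), r + r' + p * r * r')) := by
  refine ⟨fun r hr => ⟨IsUnit.of_mul_eq_one (1 + p * r) (by linear_combination p^2 * hr + p * r * h), by ring, by linear_combination -hr + r^2 * h⟩, fun r r' _ _ hpair => (Prod.mk.injEq _ _ _ _).mp hpair |>.2, fun u s _ h1 h2 => ?_, fun r r' _ _ => by simp only [Prod.mk.injEq]; exact ⟨by ring, by ring⟩⟩
  have hu : u = 1 + p * s := by linear_combination -h1
  rw [hu] at h2
  exact ⟨by linear_combination -h2 + s^2 * h, hu⟩
end

section
/- Let R be a commutative ring, p, q ∈ R with pq + 2 = 0, and t ∈ R*. Then (pt)(t⁻¹q) + 2 = 0, and the assignment [a,b] ↦ [at, b] on objects, (u,r) ↦ (u,r) on morphisms, defines an equivalence of categories Qu_f^{pq}(R) → Qu_f^{pt, t⁻¹q}(R): it is well-defined (i.e. (at)² + (pt)²b ∈ R* whenever a² + p²b ∈ R*, and morphism conditions are preserved), fully faithful, and essentially surjective. -/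
/-- For a unit `t`, the assignment `[a,b] ↦ [at,b]`, `(u,r) ↦ (u,r)` defines an
equivalence of categories `Qu_f^{pq}(R) → Qu_f^{pt,t⁻¹q}(R)`: the new parameters
satisfy the defining relation; the functor is well defined on objects and (fully and
faithfully) on morphisms; and it is essentially surjective. -/
theorem stmt_13 (R : Type*) [CommRing R] (p q : R) (h : p * q + 2 = 0) (t : Rˣ) :
    -- the new parameters satisfy the relation
    (p * t) * ((t⁻¹ : Rˣ) * q) + 2 = 0 ∧
    -- well-defined on objects
    (∀ a b : R, IsUnit (a ^ 2 + p ^ 2 * b) → IsUnit ((a * t) ^ 2 + (p * t) ^ 2 * b)) ∧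
    -- fully faithful: `(u,r)` is a morphism `[c,d] → [a,b]` in `Qu_f^{pq}(R)` iff it is a
    -- morphism `[ct,d] → [at,b]` in `Qu_f^{pt,t⁻¹q}(R)`
    (∀ a b c d u r : R,
      (IsUnit u ∧ c = a * u - p * r ∧ d = u ^ 2 * b - q * r * u * a - r ^ 2) ↔
      (IsUnit u ∧ c * t = (a * t) * u - (p * t) * r ∧
        d = u ^ 2 * b - ((t⁻¹ : Rˣ) * q) * r * u * (a * t) - r ^ 2)) ∧
    -- essentially surjective
    (∀ A B : R, IsUnit (A ^ 2 + (p * t) ^ 2 * B) →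
      ∃ a b : R, IsUnit (a ^ 2 + p ^ 2 * b) ∧ a * t = A ∧ b = B) := by
  have ht : (t : R) * (t⁻¹ : Rˣ) = 1 := by exact_mod_cast t.mul_inv
  refine ⟨?_, ?_, ?_, ?_⟩
  · calc p * t * ((t⁻¹ : Rˣ) * q) + 2 = p * q * ((t : R) * (t⁻¹ : Rˣ)) + 2 := by ring
    _ = 0 := by rw [ht]; simpa using h
  · intro a b hu
    have : ((a * t) ^ 2 + (p * t) ^ 2 * b) = (a ^ 2 + p ^ 2 * b) * (t : R) ^ 2 := by ring
    rw [this]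
    exact hu.mul ((t ^ 2).isUnit)
  · intro a b c d u r
    have hq : ((t⁻¹ : Rˣ) : R) * q * r * u * (a * t) = q * r * u * a := by
      calc ((t⁻¹ : Rˣ) : R) * q * r * u * (a * t) = q * r * u * a * ((t : R) * (t⁻¹ : Rˣ)) := by ring
      _ = q * r * u * a := by rw [ht]; ring
    constructor
    · rintro ⟨h1, h2, h3⟩
      exact ⟨h1, by rw [h2]; ring, by rw [h3, hq]⟩
    · rintro ⟨h1, h2, h3⟩
      refine ⟨h1, ?_, by rw [h3, hq]⟩
      have := congrArg (· * ((t⁻¹ : Rˣ) : R)) h2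
      calc c = c * ((t : R) * (t⁻¹ : Rˣ)) := by rw [ht]; ring
      _ = (a * t * u - p * t * r) * (t⁻¹ : Rˣ) := by rw [← this]; ring
      _ = (a * u - p * r) * ((t : R) * (t⁻¹ : Rˣ)) := by ring
      _ = a * u - p * r := by rw [ht]; ring
  · intro A B hu
    refine ⟨A * (t⁻¹ : Rˣ), B, ?_, by rw [mul_assoc]; simp [ht, mul_comm ((t : R)) _], rfl⟩
    have : (A * (t⁻¹ : Rˣ)) ^ 2 + p ^ 2 * B = (A ^ 2 + (p * t) ^ 2 * B) * ((t⁻¹ : Rˣ) : R) ^ 2 - p ^ 2 * B * ((t : R) * (t⁻¹ : Rˣ)) ^ 2 + p ^ 2 * B := by ring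
    rw [this, ht]
    simpa using hu.mul ((t⁻¹ ^ 2).isUnit)
end

section
/- Let R be a commutative ring, p, q ∈ R with pq + 2 = 0. For any x ∈ R with 1 + p²x ∈ R*, if there exist u ∈ R* and r ∈ R with 1 = u - pr and 0 = u²x - qru - r², then u = 1 + pr and 0 = x + (r² - qr)(1 + p²x). (This shows that the functor ρ : 𝔙^{pq}(R) → Qu_f^{pq}(R), ρ(x) = [1,x], induces an injective map on isomorphism classes.) -/
/-- If `(u,r)` is a morphism `[1,0] → [1,x]` in `Qu_f^{pq}(R)` (so `1 = u - pr` and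
`0 = u²x - qru - r²`), then `u = 1 + pr` and `0 = x + (r² - qr)(1 + p²x)`. -/
theorem stmt_14 (R : Type*) [CommRing R] (p q : R) (h : p * q + 2 = 0)
    (x u r : R) (hx : IsUnit (1 + p ^ 2 * x)) (hu : IsUnit u)
    (h1 : 1 = u - p * r) (h2 : 0 = u ^ 2 * x - q * r * u - r ^ 2) :
    u = 1 + p * r ∧ 0 = x + (r ^ 2 - q * r) * (1 + p ^ 2 * x) := by
  have hu' : u = 1 + p * r := by linear_combination -h1
  subst hu'
  refine ⟨rfl, ?_⟩
  linear_combination h2 + (p * r * x - r ^ 2) * h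
end

section
/- Let R be a commutative local ring, p, q ∈ R with pq + 2 = 0. For any a ∈ R such that there exists b ∈ R with a² + p²b ∈ R*, there exist u ∈ R* and r ∈ R such that either a = 1·u - pr or 1 = au - pr; more precisely, a and 1 are connected by a morphism in the category 𝔖^{pq}(R) and hence the group S^{pq}(R) = π₀(𝔖^{pq}(R)) is trivial. -/
/-- If `R` is a local ring, every object `a` of `𝔖^{pq}(R)` is connected to `1` by a
morphism: there are `u ∈ R*` and `r ∈ R` with `a = u - pr` or `1 = au - pr`. Hence
`S^{pq}(R) = 0`. -/
theorem stmt_15 (R : Type*) [CommRing R] [IsLocalRing R] (p q : R) (h : p * q + 2 = 0)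
    (a b : R) (hab : IsUnit (a ^ 2 + p ^ 2 * b)) :
    ∃ u r : R, IsUnit u ∧ (a = 1 * u - p * r ∨ 1 = a * u - p * r) := by
  by_cases ha : IsUnit a
  · refine ⟨(↑ha.unit⁻¹ : R), 0, ha.unit⁻¹.isUnit, Or.inr ?_⟩
    have := ha.unit.mul_inv
    simp only [mul_zero, sub_zero]
    calc (1 : R) = ↑ha.unit * ↑ha.unit⁻¹ := (Units.mul_inv _).symm
    _ = a * ↑ha.unit⁻¹ := by rw [ha.unit_spec]
  · have hp2b : IsUnit (p ^ 2 * b) := by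
      rcases IsLocalRing.isUnit_or_isUnit_of_isUnit_add hab with h1 | h1
      · exact absurd (by simpa [pow_two] using isUnit_of_mul_isUnit_left (by simpa [pow_two] using h1 : IsUnit (a * a))) ha
      · exact h1
    have hp : IsUnit p := by
      have h2 : IsUnit (p * (p * b)) := by
        have : p * (p * b) = p ^ 2 * b := by ring
        rw [this]; exact hp2b
      exact isUnit_of_mul_isUnit_left h2
    refine ⟨1, (↑hp.unit⁻¹ : R) * (1 - a), isUnit_one, Or.inl ?_⟩
    have : p * ((↑hp.unit⁻¹ : R) * (1 - a)) = 1 - a := by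
      rw [← mul_assoc, hp.mul_val_inv, one_mul]
    rw [this]; ring
end

section
/- Let R be a commutative ring with q ∈ R such that 0·q + 2 = 0 (i.e. 2 = 0 in R, p = 0). Then the set R₀ = {r² + qr | r ∈ R} is a subgroup of (R,+), and Qu_f^{0,q}(R) ≅ R/R₀; in particular, two objects [1,x] and [1,y] of Qu_f^{0,q}(R) are isomorphic if and only if x - y ∈ R₀. -/
/-- Suppose `2 = 0` in `R` (the case `p = 0`, `0·q + 2 = 0`). Then
`R₀ = {r² + qr | r ∈ R}` is an additive subgroup of `R`, and two objects `[1,x]`, `[1,y]`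
of `Qu_f^{0,q}(R)` are isomorphic iff `x - y ∈ R₀` (so `Qu_f^{0,q}(R) ≅ R/R₀`). -/
theorem stmt_17 (R : Type*) [CommRing R] (q : R) (h : (0 : R) * q + 2 = 0) :
    -- `R₀` is closed under addition
    (∀ r s : R, ∃ t : R, (r ^ 2 + q * r) + (s ^ 2 + q * s) = t ^ 2 + q * t) ∧
    -- `R₀` contains `0`
    (∃ t : R, (0 : R) = t ^ 2 + q * t) ∧
    -- `R₀` is closed under negation
    (∀ r : R, ∃ t : R, -(r ^ 2 + q * r) = t ^ 2 + q * t) ∧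
    -- `[1,x] ≅ [1,y]` iff `x - y ∈ R₀`
    (∀ x y : R,
      (∃ u r : R, IsUnit u ∧ (1 : R) = u - 0 * r ∧
        y = u ^ 2 * x - q * r * u - r ^ 2) ↔ ∃ r : R, x - y = r ^ 2 + q * r) := by
  have h2 : (2 : R) = 0 := by linear_combination h
  refine ⟨?_, ⟨0, by ring⟩, ?_, ?_⟩
  · intro r s
    exact ⟨r + s, by linear_combination (-(r * s)) * h2⟩
  · intro r
    exact ⟨r, by linear_combination (-(r ^ 2) - q * r) * h2⟩
  · intro x y
    constructor
    · rintro ⟨u, r, -, hu, hy⟩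
      have hu1 : u = 1 := by linear_combination -hu
      exact ⟨r, by subst hu1; linear_combination -hy⟩
    · rintro ⟨r, hr⟩
      exact ⟨1, r, isUnit_one, by ring, by linear_combination -hr⟩
end

section
/- Let R be a commutative ring, p, q ∈ R with pq + 2 = 0, and let a, m, b ∈ R satisfy a·m = a²·q, m·p = -2a, and a² + p·a·m - p²·b ∈ R*. Then m = a·q, and a² + p·a·m - p²·b = -(a² + p²·b); in particular a² + p²b ∈ R*. -/
/-- If `a·m = a²·q`, `m·p = -2a` and `a² + p·a·m - p²·b` is a unit, then `m = a·q` and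
`a² + p·a·m - p²·b = -(a² + p²·b)`; in particular `a² + p²b` is a unit. -/
theorem stmt_19 (R : Type*) [CommRing R] (p q : R) (h : p * q + 2 = 0)
    (a m b : R) (h1 : a * m = a ^ 2 * q) (h2 : m * p = -(2 * a))
    (h3 : IsUnit (a ^ 2 + p * a * m - p ^ 2 * b)) :
    m = a * q ∧ a ^ 2 + p * a * m - p ^ 2 * b = -(a ^ 2 + p ^ 2 * b) ∧
      IsUnit (a ^ 2 + p ^ 2 * b) := by
  have key : (m - a * q) * (a ^ 2 + p * a * m - p ^ 2 * b) = 0 := by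
    linear_combination (a + p * m) * h1 + (-(p * b)) * h2 + (p * a * b) * h
  obtain ⟨u, hu⟩ := h3
  have hm : m = a * q := by
    have := congrArg (fun x => x * (↑u⁻¹ : R)) key
    simp only [zero_mul] at this
    have h4 : (m - a * q) * ((a ^ 2 + p * a * m - p ^ 2 * b) * ↑u⁻¹) = 0 := by
      rw [← mul_assoc]; exact this
    rw [← hu, Units.mul_inv, mul_one] at h4
    exact sub_eq_zero.mp h4
  have heq : a ^ 2 + p * a * m - p ^ 2 * b = -(a ^ 2 + p ^ 2 * b) := by
    rw [hm]; linear_combination a ^ 2 * h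
  refine ⟨hm, heq, ?_⟩
  have h3' : IsUnit (a ^ 2 + p * a * m - p ^ 2 * b) := ⟨u, hu⟩
  rw [heq] at h3'
  exact (IsUnit.neg_iff _).mp h3'
end
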